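/- With q₁ the first-order rogue wave as above (L₁, L₂ built from e₁,…,e₄), one has |q₁(x,t)|² = c²·|L₂|²/|L₁|², and for every fixed t, |q₁(x,t)|² → c² as x → ±∞. -/

import Mathlib

/-!
The phase factor of `q₁` has modulus one and `‖conj L₁ · L₂ / L₁²‖ = ‖L₂‖ / ‖L₁‖`, which gives the
modulus formula. As `|x| → ∞`, `L₁` and `L₂` are quadratics in `x` with leading coefficients
`-2ac²` and `2ac²`, so `L₂ / L₁ → -1` and `|q₁|² → c²`.
-/

open Complex

noncomputable def e1rw (a c x t : ℝ) : ℝ :=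
  -8*t^2*c^2*a^3 + 12*t^2*c^4*a^2 - 8*x*c^2*t*a^2 + 8*x*c^4*t*a - 2*a*x^2*c^2 - 6*t^2*c^6*a - 1

noncomputable def e2rw (a c x t : ℝ) : ℝ := 4*a*t*c^2 - 6*t*c^4 + 2*x*c^2

noncomputable def e3rw (a c x t : ℝ) : ℝ :=
  8*t^2*c^2*a^3 + 8*x*c^2*t*a^2 - 12*t^2*c^4*a^2 + 2*a*x^2*c^2 - 8*x*c^4*t*a + 6*t^2*c^6*a - 3

noncomputable def e4rw (a c x t : ℝ) : ℝ := 12*a*t*c^2 - 6*t*c^4 + 2*x*c^2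

noncomputable def L1rw (a c x t : ℝ) : ℂ := (e1rw a c x t : ℂ) + Complex.I * (e2rw a c x t : ℂ)

noncomputable def L2rw (a c x t : ℝ) : ℂ := (e3rw a c x t : ℂ) + Complex.I * (e4rw a c x t : ℂ)

/-- First-order rogue wave of DNLS. -/
noncomputable def q1rw (a c x t : ℝ) : ℂ :=
  (starRingEnd ℂ) (L1rw a c x t) * L2rw a c x t / (L1rw a c x t) ^ 2
    * (c : ℂ) * Complex.exp (Complex.I * (a : ℂ) * ((x : ℂ) - (t : ℂ) * (c : ℂ) ^ 2 + (t : ℂ) * (a : ℂ)))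

open Filter Topology

open Bornology

lemma norm_conj_mul_div_sq (z w : ℂ) : ‖starRingEnd ℂ z * w / z ^ 2‖ = ‖w‖ / ‖z‖ := by
  rcases eq_or_ne z 0 with rfl | hz
  · simp
  · rw [norm_div, norm_mul, Complex.norm_conj, norm_pow, sq,
      mul_div_mul_left _ _ (norm_ne_zero_iff.2 hz)]

lemma norm_q1rw_sq (a c x t : ℝ) :
    ‖q1rw a c x t‖ ^ 2 = c ^ 2 * ‖L2rw a c x t‖ ^ 2 / ‖L1rw a c x t‖ ^ 2 := by
  have hphase :
      ‖Complex.exp (Complex.I * a * ((x : ℂ) - t * (c : ℂ) ^ 2 + t * a))‖ = 1 := by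
    rw [← norm_exp_I_mul_ofReal (a * (x - t * c ^ 2 + t * a))]
    push_cast
    ring_nf
  rw [q1rw, norm_mul, norm_mul, hphase, norm_conj_mul_div_sq, Complex.norm_real, Real.norm_eq_abs]
  rw [mul_one, mul_pow, div_pow, sq_abs]
  ring

lemma tendsto_quadratic_div_sq_cobounded {𝕜 : Type*} [RCLike 𝕜] (α β γ : 𝕜) :
    Tendsto (fun x : ℝ => (α * x ^ 2 + β * x + γ) / (x : 𝕜) ^ 2) (cobounded ℝ) (𝓝 α) := by
  have hinv : Tendsto (fun x : ℝ => ((x⁻¹ : ℝ) : 𝕜)) (cobounded ℝ) (𝓝 0) := by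
    simpa only [Function.comp_def, RCLike.ofReal_zero] using
      (RCLike.continuous_ofReal.tendsto (0 : ℝ)).comp tendsto_inv₀_cobounded
  have hlim : Tendsto (fun x : ℝ => α + β * ((x⁻¹ : ℝ) : 𝕜) + γ * ((x⁻¹ : ℝ) : 𝕜) ^ 2)
      (cobounded ℝ) (𝓝 α) := by
    simpa using ((hinv.const_mul β).const_add α).add ((hinv.pow 2).const_mul γ)
  refine hlim.congr' ?_
  filter_upwards [eventually_ne_cobounded (0 : ℝ)] with x hx
  have hx' : (x : 𝕜) ≠ 0 := RCLike.ofReal_ne_zero.2 hx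
  push_cast
  field_simp

lemma L1rw_eq_quadratic (a c x t : ℝ) :
    L1rw a c x t = (-2 * a * c ^ 2 : ℂ) * x ^ 2
      + ((8 * c ^ 4 * t * a - 8 * c ^ 2 * t * a ^ 2 : ℂ) + 2 * c ^ 2 * Complex.I) * x
      + ((-8 * t ^ 2 * c ^ 2 * a ^ 3 + 12 * t ^ 2 * c ^ 4 * a ^ 2 - 6 * t ^ 2 * c ^ 6 * a - 1 : ℂ)
        + (4 * a * t * c ^ 2 - 6 * t * c ^ 4 : ℂ) * Complex.I) := by
  simp only [L1rw, e1rw, e2rw]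
  push_cast
  ring

lemma L2rw_eq_quadratic (a c x t : ℝ) :
    L2rw a c x t = (2 * a * c ^ 2 : ℂ) * x ^ 2
      + ((8 * c ^ 2 * t * a ^ 2 - 8 * c ^ 4 * t * a : ℂ) + 2 * c ^ 2 * Complex.I) * x
      + ((8 * t ^ 2 * c ^ 2 * a ^ 3 - 12 * t ^ 2 * c ^ 4 * a ^ 2 + 6 * t ^ 2 * c ^ 6 * a - 3 : ℂ)
        + (12 * a * t * c ^ 2 - 6 * t * c ^ 4 : ℂ) * Complex.I) := by
  simp only [L2rw, e3rw, e4rw]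
  push_cast
  ring

lemma tendsto_L2rw_div_L1rw (a c t : ℝ) (ha : a ≠ 0) (hc : c ≠ 0) :
    Tendsto (fun x => L2rw a c x t / L1rw a c x t) (cobounded ℝ) (𝓝 (-1)) := by
  have hlead : (-2 * a * c ^ 2 : ℂ) ≠ 0 := by norm_cast; simp [ha, hc]
  have hL2 : Tendsto (fun x : ℝ => L2rw a c x t / (x : ℂ) ^ 2) (cobounded ℝ)
      (𝓝 (2 * a * c ^ 2)) := by
    simp_rw [L2rw_eq_quadratic]
    exact tendsto_quadratic_div_sq_cobounded _ _ _
  have hL1 : Tendsto (fun x : ℝ => L1rw a c x t / (x : ℂ) ^ 2) (cobounded ℝ)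
      (𝓝 (-2 * a * c ^ 2)) := by
    simp_rw [L1rw_eq_quadratic]
    exact tendsto_quadratic_div_sq_cobounded _ _ _
  have hquot : (2 * a * c ^ 2 : ℂ) / (-2 * a * c ^ 2) = -1 := by
    rw [neg_mul, neg_mul, div_neg, div_self (by simpa [neg_mul] using hlead)]
  refine hquot ▸ (hL2.div hL1 hlead).congr' ?_
  filter_upwards [eventually_ne_cobounded (0 : ℝ)] with x hx
  exact div_div_div_cancel_right₀ (pow_ne_zero 2 (Complex.ofReal_ne_zero.2 hx)) _ _

theorem first_order_rogue_wave_modulus_and_limit_general (a c : ℝ) (ha : a ≠ 0) (hc : c ≠ 0) :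
    (∀ x t : ℝ, (‖q1rw a c x t‖) ^ 2
        = c ^ 2 * (‖L2rw a c x t‖) ^ 2 / (‖L1rw a c x t‖) ^ 2) ∧
    (∀ t : ℝ, Tendsto (fun x => (‖q1rw a c x t‖) ^ 2) atTop (𝓝 (c ^ 2))) ∧
    (∀ t : ℝ, Tendsto (fun x => (‖q1rw a c x t‖) ^ 2) atBot (𝓝 (c ^ 2))) := by
  have hlim (t : ℝ) : Tendsto (fun x => ‖q1rw a c x t‖ ^ 2) (cobounded ℝ) (𝓝 (c ^ 2)) := by
    have h := ((tendsto_L2rw_div_L1rw a c t ha hc).norm.pow 2).const_mul (c ^ 2)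
    simp only [norm_neg, norm_one, one_pow, mul_one, norm_div, div_pow] at h
    simpa only [norm_q1rw_sq, mul_div_assoc] using h
  exact ⟨norm_q1rw_sq a c, fun t => (hlim t).mono_left IsOrderBornology.atTop_le_cobounded,
    fun t => (hlim t).mono_left IsOrderBornology.atBot_le_cobounded⟩

/-- `|q₁(x,t)|² = c²|L₂|²/|L₁|²`, and for every fixed `t`, `|q₁(x,t)|² → c²` as `x → ±∞`. -/
theorem first_order_rogue_wave_modulus_and_limit (a c : ℝ) (ha : a ≠ 0) (hc : c ≠ 0)
    (hL : ∀ x t : ℝ, L1rw a c x t ≠ 0) :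
    (∀ x t : ℝ, (‖q1rw a c x t‖) ^ 2
        = c ^ 2 * (‖L2rw a c x t‖) ^ 2 / (‖L1rw a c x t‖) ^ 2) ∧
    (∀ t : ℝ, Tendsto (fun x => (‖q1rw a c x t‖) ^ 2) atTop (𝓝 (c ^ 2))) ∧
    (∀ t : ℝ, Tendsto (fun x => (‖q1rw a c x t‖) ^ 2) atBot (𝓝 (c ^ 2))) :=
  first_order_rogue_wave_modulus_and_limit_general a c ha hc
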